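/- Let 𝒢 be a groupoid with 𝒢₀ finite, A a unital 𝒢-graded algebra over a field k, and X a finite split 𝒢-set via α=(X_g,α_g)_{g∈𝒢}. Then the smash product A #_α^𝒢 X = ⊕_{g∈𝒢} ⊕_{x∈X_{d(g)}} A_g δ_x, with multiplication induced by (a_g δ_x)(b_h δ_y) = a_g b_h δ_y if d(g)=r(h) and α_h(y)=x, and 0 otherwise, is an associative unital algebra with identity element 1 = Σ_{e∈𝒢₀} Σ_{x∈X_e} 1_e δ_x; moreover the elements {1_e δ_x : e ∈ 𝒢₀, x ∈ X_e} form a set of pairwise orthogonal idempotents. -/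

import Mathlib

open scoped Classical

noncomputable section

universe u v w

/-- A groupoid, presented as a set of morphisms with partially defined
composition.  `s g` is the domain (source) identity `d(g)`, `t g` the range
(target) identity `r(g)`; `mul g h` is the composite `gh`, meaningful when
`s g = t h`. -/
structure Gpd (G : Type u) where
  s : G → G
  t : G → G
  inv : G → G
  mul : G → G → G
  s_s : ∀ g, s (s g) = s g
  t_s : ∀ g, t (s g) = s g
  s_t : ∀ g, s (t g) = t g
  t_t : ∀ g, t (t g) = t g
  s_mul : ∀ g h, s g = t h → s (mul g h) = s h
  t_mul : ∀ g h, s g = t h → t (mul g h) = t g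
  mul_assoc : ∀ g h l, s g = t h → s h = t l → mul (mul g h) l = mul g (mul h l)
  mul_src : ∀ g, mul g (s g) = g
  tgt_mul : ∀ g, mul (t g) g = g
  s_inv : ∀ g, s (inv g) = t g
  t_inv : ∀ g, t (inv g) = s g
  inv_mul : ∀ g, mul (inv g) g = s g
  mul_inv : ∀ g, mul g (inv g) = t g

namespace Gpd

variable {G : Type u}

/-- `e` is an object (identity) of the groupoid. -/
def obj (𝒢 : Gpd G) (e : G) : Prop := 𝒢.s e = e

/-- The set `𝒢₀` of objects of the groupoid. -/
def Objs (𝒢 : Gpd G) : Set G := {e | 𝒢.obj e}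

end Gpd

/-- An action `α = (X_g, α_g)` of a groupoid `𝒢` on a set `X`:
`car g` is the subset `X_g` and `act g` restricts to the bijection
`α_g : X_{g⁻¹} → X_g`. -/
structure GpdSetAction {G : Type u} (𝒢 : Gpd G) (X : Type v) where
  car : G → Set X
  act : G → X → X
  car_t : ∀ g, car g = car (𝒢.t g)
  bijOn : ∀ g, Set.BijOn (act g) (car (𝒢.inv g)) (car g)
  act_id : ∀ e, 𝒢.obj e → ∀ x ∈ car e, act e x = x
  act_mul : ∀ g h, 𝒢.s g = 𝒢.t h → ∀ x ∈ car (𝒢.inv h),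
    act g (act h x) = act (𝒢.mul g h) x

/-- `X` is a split `𝒢`-set: `X` is the disjoint union of the `X_e`, `e ∈ 𝒢₀`. -/
def GpdSetAction.Split {G : Type u} {𝒢 : Gpd G} {X : Type v} (α : GpdSetAction 𝒢 X) : Prop :=
  ∀ x : X, ∃! e : G, 𝒢.obj e ∧ x ∈ α.car e

/-- The action is fully faithful: if `α_g` fixes some `x ∈ X_g ∩ X_{g⁻¹}`
then `g` is an identity. -/
def GpdSetAction.FullyFaithful {G : Type u} {𝒢 : Gpd G} {X : Type v}
    (α : GpdSetAction 𝒢 X) : Prop :=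
  ∀ g x, x ∈ α.car g ∩ α.car (𝒢.inv g) → α.act g x = x → 𝒢.obj g

/-- A `𝒢`-grading of the `k`-algebra `A`:  `A = ⊕_{g ∈ 𝒢} A_g` with
`A_g A_h ⊆ A_{gh}` for composable `g, h` and `A_g A_h = 0` otherwise. -/
structure GpdGrading {G : Type u} (𝒢 : Gpd G) (k : Type v) (A : Type w)
    [Field k] [Ring A] [Algebra k A] where
  comp : G → Submodule k A
  internal : DirectSum.IsInternal comp
  mul_mem : ∀ g h, 𝒢.s g = 𝒢.t h → ∀ a ∈ comp g, ∀ b ∈ comp h, a * b ∈ comp (𝒢.mul g h)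
  mul_eq_zero : ∀ g h, 𝒢.s g ≠ 𝒢.t h → ∀ a ∈ comp g, ∀ b ∈ comp h, a * b = 0

/-- The homogeneous component of degree `g` of `a ∈ A`. -/
noncomputable def GpdGrading.proj {G : Type u} {𝒢 : Gpd G} {k : Type v} {A : Type w}
    [Field k] [Ring A] [Algebra k A] (𝒜 : GpdGrading 𝒢 k A) (g : G) (a : A) : A :=
  ((Equiv.ofBijective _ 𝒜.internal).symm a g : A)

/-- `one : G → A` is a family of local units for the grading: each `one e`
(`e ∈ 𝒢₀`) is an identity element of `A_e` and `1_A = Σ_{e ∈ 𝒢₀} 1_e`. -/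
def IsIdFamily {G : Type u} {𝒢 : Gpd G} {k : Type v} {A : Type w}
    [Field k] [Ring A] [Algebra k A] (𝒜 : GpdGrading 𝒢 k A) (one : G → A) : Prop :=
  (∀ e, 𝒢.obj e → one e ∈ 𝒜.comp e ∧ ∀ a ∈ 𝒜.comp e, one e * a = a ∧ a * one e = a) ∧
  (1 : A) = ∑ᶠ e ∈ 𝒢.Objs, one e

/-- The multiplication of the smash product `A #_α^𝒢 X`, defined on the
ambient space of formal sums `Σ a_{(g,x)} δ_{(g,x)}`:
`(a δ_{(g,x)}) (b δ_{(h,y)}) = (a b) δ_{(gh, y)}` when `d(g) = r(h)` and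
`α_h(y) = x`, and `0` otherwise. -/
noncomputable def smashMul {G : Type u} {𝒢 : Gpd G} {X : Type v} {A : Type w} [Ring A]
    (α : GpdSetAction 𝒢 X) (f₁ f₂ : (G × X) →₀ A) : (G × X) →₀ A :=
  f₁.sum fun p a => f₂.sum fun q b =>
    if 𝒢.s p.1 = 𝒢.t q.1 ∧ α.act q.1 q.2 = p.2
    then Finsupp.single (𝒢.mul p.1 q.1, q.2) (a * b) else 0

/-- The underlying set of the smash product `A #_α^𝒢 X = ⊕_{g} ⊕_{x ∈ X_{d(g)}} A_g δ_x`: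
those formal sums whose `(g,x)`-coefficient lies in `A_g`, supported on pairs
with `x ∈ X_{d(g)}`. -/
def smashSet {G : Type u} {𝒢 : Gpd G} {X : Type v} {k : Type*} {A : Type w}
    [Field k] [Ring A] [Algebra k A]
    (α : GpdSetAction 𝒢 X) (𝒜 : GpdGrading 𝒢 k A) : Set ((G × X) →₀ A) :=
  {f | ∀ p : G × X, f p ∈ 𝒜.comp p.1 ∧ (f p ≠ 0 → p.2 ∈ α.car (𝒢.s p.1))}

/-- The identity element `Σ_{e ∈ 𝒢₀} Σ_{x ∈ X_e} 1_e δ_x` of the smash product. -/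
noncomputable def smashOne {G : Type u} {𝒢 : Gpd G} {X : Type v} {A : Type w} [Ring A]
    (α : GpdSetAction 𝒢 X) (one : G → A) : (G × X) →₀ A :=
  ∑ᶠ e ∈ 𝒢.Objs, ∑ᶠ x ∈ α.car e, Finsupp.single ((e, x) : G × X) (one e)

/-!
The product is the `k`-bilinear extension of its values on the elements `a δ_{(g,x)}`, so each
identity reduces to one between such elements, where it is a direct computation: associativity
comes from that of `𝒢` and from `α_g ∘ α_h = α_{gh}`, which needs `x ∈ X_{d(h)}` for the last
factor `c δ_{(h,x)}`. In `1 · b δ_{(h,y)}` only the term `1_{r(h)} δ_{α_h(y)}` survives, and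
`1_{r(h)} b = b` because `1_A = Σ_e 1_e` while `1_e A_h = 0` for `e ≠ r(h)`.
-/

open Finsupp

namespace Gpd

variable {G : Type u} (𝒢 : Gpd G)

theorem obj_s (g : G) : 𝒢.obj (𝒢.s g) := 𝒢.s_s g

theorem obj_t (g : G) : 𝒢.obj (𝒢.t g) := 𝒢.s_t g

variable {𝒢}

theorem t_eq_of_obj {e : G} (he : 𝒢.obj e) : 𝒢.t e = e := by
  rw [← he, 𝒢.t_s]

theorem mul_self_of_obj {e : G} (he : 𝒢.obj e) : 𝒢.mul e e = e :=
  (congrArg (𝒢.mul e) he).symm.trans (𝒢.mul_src e)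

end Gpd

namespace GpdSetAction

variable {G : Type u} {𝒢 : Gpd G} {X : Type v} (α : GpdSetAction 𝒢 X)

theorem car_inv (g : G) : α.car (𝒢.inv g) = α.car (𝒢.s g) := by
  rw [α.car_t, 𝒢.t_inv]

theorem act_mem {g : G} {x : X} (hx : x ∈ α.car (𝒢.s g)) : α.act g x ∈ α.car (𝒢.t g) := by
  rw [← α.car_t]
  exact (α.bijOn g).mapsTo (by rwa [car_inv])

end GpdSetAction

namespace IsIdFamily

variable {G : Type u} {𝒢 : Gpd G} {k : Type v} {A : Type w} [Field k] [Ring A] [Algebra k A]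
  {𝒜 : GpdGrading 𝒢 k A} {one : G → A}

theorem one_eq_sum (hone : IsIdFamily 𝒜 one) (hG₀ : 𝒢.Objs.Finite) :
    (1 : A) = ∑ e ∈ hG₀.toFinset, one e :=
  hone.2.trans (finsum_mem_eq_finite_toFinset_sum one hG₀)

theorem one_t_mul (hone : IsIdFamily 𝒜 one) (hG₀ : 𝒢.Objs.Finite) {g : G} {b : A}
    (hb : b ∈ 𝒜.comp g) : one (𝒢.t g) * b = b := by
  calc one (𝒢.t g) * b = ∑ e ∈ hG₀.toFinset, one e * b := by
        symm
        refine Finset.sum_eq_single_of_mem _ (hG₀.mem_toFinset.2 (𝒢.obj_t g)) fun e he hne => ?_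
        replace he : 𝒢.obj e := hG₀.mem_toFinset.1 he
        exact 𝒜.mul_eq_zero e g (by rwa [he]) _ (hone.1 e he).1 _ hb
    _ = b := by rw [← Finset.sum_mul, ← hone.one_eq_sum hG₀, one_mul]

theorem mul_one_s (hone : IsIdFamily 𝒜 one) (hG₀ : 𝒢.Objs.Finite) {g : G} {b : A}
    (hb : b ∈ 𝒜.comp g) : b * one (𝒢.s g) = b := by
  calc b * one (𝒢.s g) = ∑ e ∈ hG₀.toFinset, b * one e := by
        symm
        refine Finset.sum_eq_single_of_mem _ (hG₀.mem_toFinset.2 (𝒢.obj_s g)) fun e he hne => ?_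
        replace he : 𝒢.obj e := hG₀.mem_toFinset.1 he
        exact 𝒜.mul_eq_zero g e (by rw [Gpd.t_eq_of_obj he]; exact hne.symm) _ hb _ (hone.1 e he).1
    _ = b := by rw [← Finset.mul_sum, ← hone.one_eq_sum hG₀, mul_one]

end IsIdFamily

section Bilinear

variable {G : Type u} {𝒢 : Gpd G} {X : Type v} {A : Type w} [Ring A] (α : GpdSetAction 𝒢 X)

variable (R : Type*) [CommSemiring R] [Algebra R A] in
def smashMulₗ : ((G × X) →₀ A) →ₗ[R] ((G × X) →₀ A) →ₗ[R] ((G × X) →₀ A) :=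
  Finsupp.lsum R fun p => (Finsupp.lsum R fun q =>
    (if 𝒢.s p.1 = 𝒢.t q.1 ∧ α.act q.1 q.2 = p.2 then
      (LinearMap.mul R A).compr₂ (Finsupp.lsingle (𝒢.mul p.1 q.1, q.2)) else 0).flip).flip

variable (R : Type*) [CommSemiring R] [Algebra R A] in
theorem smashMul_eq_smashMulₗ (f₁ f₂ : (G × X) →₀ A) :
    smashMul α f₁ f₂ = smashMulₗ α R f₁ f₂ := by
  simp only [smashMul, smashMulₗ, Finsupp.lsum_apply, LinearMap.sum_apply, LinearMap.flip_apply,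
    Finsupp.sum]
  refine Finset.sum_congr rfl fun p _ => Finset.sum_congr rfl fun q _ => ?_
  split_ifs <;> simp

theorem smashMul_add_left (f₁ f₂ f₃ : (G × X) →₀ A) :
    smashMul α (f₁ + f₂) f₃ = smashMul α f₁ f₃ + smashMul α f₂ f₃ := by
  simp only [smashMul_eq_smashMulₗ α ℕ, map_add, LinearMap.add_apply]

theorem smashMul_add_right (f₁ f₂ f₃ : (G × X) →₀ A) :
    smashMul α f₁ (f₂ + f₃) = smashMul α f₁ f₂ + smashMul α f₁ f₃ := by
  simp only [smashMul_eq_smashMulₗ α ℕ, map_add]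

theorem smashMul_zero_left (f : (G × X) →₀ A) : smashMul α 0 f = 0 := by
  simp only [smashMul_eq_smashMulₗ α ℕ, map_zero, LinearMap.zero_apply]

theorem smashMul_zero_right (f : (G × X) →₀ A) : smashMul α f 0 = 0 := by
  simp only [smashMul_eq_smashMulₗ α ℕ, map_zero]

theorem smashMul_sum_left {ι : Type*} (s : Finset ι) (f : ι → (G × X) →₀ A)
    (g : (G × X) →₀ A) : smashMul α (∑ i ∈ s, f i) g = ∑ i ∈ s, smashMul α (f i) g := by
  simp only [smashMul_eq_smashMulₗ α ℕ, map_sum, LinearMap.sum_apply]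

theorem smashMul_sum_right {ι : Type*} (s : Finset ι) (f : ι → (G × X) →₀ A)
    (g : (G × X) →₀ A) : smashMul α g (∑ i ∈ s, f i) = ∑ i ∈ s, smashMul α g (f i) := by
  simp only [smashMul_eq_smashMulₗ α ℕ, map_sum]

theorem smashMul_single_single (p q : G × X) (a b : A) :
    smashMul α (single p a) (single q b) =
      if 𝒢.s p.1 = 𝒢.t q.1 ∧ α.act q.1 q.2 = p.2
      then single (𝒢.mul p.1 q.1, q.2) (a * b) else 0 := by
  simp [smashMul]

variable {R : Type*} [CommSemiring R] [Algebra R A]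

theorem smashMul_smul_left (c : R) (f₁ f₂ : (G × X) →₀ A) :
    smashMul α (c • f₁) f₂ = c • smashMul α f₁ f₂ := by
  simp only [smashMul_eq_smashMulₗ α R, map_smul, LinearMap.smul_apply]

theorem smashMul_smul_right (c : R) (f₁ f₂ : (G × X) →₀ A) :
    smashMul α f₁ (c • f₂) = c • smashMul α f₁ f₂ := by
  simp only [smashMul_eq_smashMulₗ α R, map_smul]

end Bilinear

section SmashProduct

variable {G : Type u} {𝒢 : Gpd G} {X : Type v} {k : Type*} {A : Type w}
  [Field k] [Ring A] [Algebra k A] {α : GpdSetAction 𝒢 X} {𝒜 : GpdGrading 𝒢 k A}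

variable (α 𝒜) in
def smashSubmodule : Submodule k ((G × X) →₀ A) where
  carrier := smashSet α 𝒜
  zero_mem' p := by simp
  add_mem' {f g} hf hg p := by
    refine ⟨add_mem (hf p).1 (hg p).1, fun hfg => ?_⟩
    by_cases hfp : f p = 0
    · exact (hg p).2 (by simpa [hfp] using hfg)
    · exact (hf p).2 hfp
  smul_mem' c f hf p :=
    ⟨Submodule.smul_mem _ c (hf p).1, fun hcf => (hf p).2 (right_ne_zero_of_smul hcf)⟩

theorem single_mem_smashSet {p : G × X} {a : A} (ha : a ∈ 𝒜.comp p.1)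
    (hp : p.2 ∈ α.car (𝒢.s p.1)) : single p a ∈ smashSet α 𝒜 := by
  intro q
  rcases eq_or_ne p q with rfl | hpq
  · simpa using ⟨ha, fun _ => hp⟩
  · simp [single_eq_of_ne' hpq]

@[elab_as_elim]
theorem smashSet_induction {P : ((G × X) →₀ A) → Prop} (zero : P 0)
    (add : ∀ f g, P f → P g → P (f + g))
    (single : ∀ p a, a ∈ 𝒜.comp p.1 → p.2 ∈ α.car (𝒢.s p.1) → P (single p a))
    {f : (G × X) →₀ A} (hf : f ∈ smashSet α 𝒜) : P f := by
  rw [← f.sum_single]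
  exact Finset.sum_induction _ P add zero fun p hp =>
    single p (f p) (hf p).1 ((hf p).2 (mem_support_iff.1 hp))

theorem smashMul_mem {f₁ f₂ : (G × X) →₀ A} (hf₁ : f₁ ∈ smashSet α 𝒜)
    (hf₂ : f₂ ∈ smashSet α 𝒜) : smashMul α f₁ f₂ ∈ smashSet α 𝒜 := by
  change smashMul α f₁ f₂ ∈ smashSubmodule α 𝒜
  refine smashSet_induction (by simpa only [smashMul_zero_left] using zero_mem _)
    (fun f g hf hg => by simpa only [smashMul_add_left] using add_mem hf hg)
    (fun p a ha hp => ?_) hf₁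
  refine smashSet_induction (by simpa only [smashMul_zero_right] using zero_mem _)
    (fun f g hf hg => by simpa only [smashMul_add_right] using add_mem hf hg)
    (fun q b hb hq => ?_) hf₂
  rw [smashMul_single_single]
  split_ifs with h
  · exact single_mem_smashSet (𝒜.mul_mem _ _ h.1 _ ha _ hb) (by rwa [𝒢.s_mul _ _ h.1])
  · exact zero_mem _

theorem smashMul_single_assoc (p q r : G × X) (a b c : A) (hr : r.2 ∈ α.car (𝒢.s r.1)) :
    smashMul α (smashMul α (single p a) (single q b)) (single r c) =
      smashMul α (single p a) (smashMul α (single q b) (single r c)) := by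
  by_cases hqr : 𝒢.s q.1 = 𝒢.t r.1 ∧ α.act r.1 r.2 = q.2
  · have hact : α.act (𝒢.mul q.1 r.1) r.2 = α.act q.1 q.2 := by
      rw [← α.act_mul _ _ hqr.1 _ (by rwa [α.car_inv]), hqr.2]
    by_cases hpq : 𝒢.s p.1 = 𝒢.t q.1 ∧ α.act q.1 q.2 = p.2
    · simp [smashMul_single_single, -single_mul, hpq, hqr, hact, 𝒢.s_mul _ _ hpq.1,
        𝒢.t_mul _ _ hqr.1, 𝒢.mul_assoc _ _ _ hpq.1 hqr.1, mul_assoc]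
    · simp [smashMul_single_single, -single_mul, hpq, hqr, hact, 𝒢.t_mul _ _ hqr.1,
        smashMul_zero_left]
  · by_cases hpq : 𝒢.s p.1 = 𝒢.t q.1 ∧ α.act q.1 q.2 = p.2
    · simp [smashMul_single_single, -single_mul, hpq, hqr, 𝒢.s_mul _ _ hpq.1, smashMul_zero_right]
    · simp [smashMul_single_single, -single_mul, hpq, hqr, smashMul_zero_left, smashMul_zero_right]

theorem smashMul_assoc (f₁ f₂ : (G × X) →₀ A) {f₃ : (G × X) →₀ A} (hf₃ : f₃ ∈ smashSet α 𝒜) :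
    smashMul α (smashMul α f₁ f₂) f₃ = smashMul α f₁ (smashMul α f₂ f₃) := by
  refine smashSet_induction (by simp only [smashMul_zero_right])
    (fun f g hf hg => by simp only [smashMul_add_right, hf, hg]) (fun r c _ hr => ?_) hf₃
  induction f₁ using Finsupp.induction_linear with
  | zero => simp only [smashMul_zero_left]
  | add f g hf hg => simp only [smashMul_add_left, hf, hg]
  | single p a =>
    induction f₂ using Finsupp.induction_linear with
    | zero => simp only [smashMul_zero_left, smashMul_zero_right]
    | add f g hf hg => simp only [smashMul_add_left, smashMul_add_right, hf, hg]
    | single q b => exact smashMul_single_assoc p q r a b c hr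

end SmashProduct

section Unit

variable {G : Type u} {𝒢 : Gpd G} {X : Type v} {k : Type*} {A : Type w}
  [Field k] [Ring A] [Algebra k A] [Finite X] {α : GpdSetAction 𝒢 X} {𝒜 : GpdGrading 𝒢 k A}
  {one : G → A}

theorem smashOne_eq_sum (hG₀ : 𝒢.Objs.Finite) :
    smashOne α one = ∑ e ∈ hG₀.toFinset, ∑ x ∈ (α.car e).toFinite.toFinset,
      single ((e, x) : G × X) (one e) := by
  simp only [smashOne, finsum_mem_eq_finite_toFinset_sum _ hG₀,
    finsum_mem_eq_finite_toFinset_sum _ (Set.toFinite _)]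

theorem smashOne_mem (hG₀ : 𝒢.Objs.Finite) (hone : IsIdFamily 𝒜 one) :
    smashOne α one ∈ smashSet α 𝒜 := by
  change _ ∈ smashSubmodule α 𝒜
  rw [smashOne_eq_sum hG₀]
  refine sum_mem fun e he => sum_mem fun x hx => ?_
  replace he : 𝒢.obj e := hG₀.mem_toFinset.1 he
  exact single_mem_smashSet (hone.1 e he).1 (by rw [he]; exact (Set.toFinite _).mem_toFinset.1 hx)

theorem smashOne_smashMul_single (hG₀ : 𝒢.Objs.Finite) {q : G × X} (b : A)
    (hq : q.2 ∈ α.car (𝒢.s q.1)) :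
    smashMul α (smashOne α one) (single q b) = single q (one (𝒢.t q.1) * b) := by
  rw [smashOne_eq_sum hG₀, smashMul_sum_left,
    Finset.sum_eq_single_of_mem (𝒢.t q.1) (hG₀.mem_toFinset.2 (𝒢.obj_t q.1)), smashMul_sum_left,
    Finset.sum_eq_single_of_mem (α.act q.1 q.2) ((Set.toFinite _).mem_toFinset.2 (α.act_mem hq)),
    smashMul_single_single, if_pos ⟨𝒢.obj_t q.1, rfl⟩, 𝒢.tgt_mul]
  · intro x _ hx
    rw [smashMul_single_single, if_neg fun h => hx h.2.symm]
  · intro e he hne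
    rw [smashMul_sum_left]
    refine Finset.sum_eq_zero fun x _ => ?_
    rw [smashMul_single_single, if_neg fun h => hne ((hG₀.mem_toFinset.1 he).symm.trans h.1)]

theorem single_smashMul_smashOne (hG₀ : 𝒢.Objs.Finite) {p : G × X} (a : A)
    (hp : p.2 ∈ α.car (𝒢.s p.1)) :
    smashMul α (single p a) (smashOne α one) = single p (a * one (𝒢.s p.1)) := by
  rw [smashOne_eq_sum hG₀, smashMul_sum_right,
    Finset.sum_eq_single_of_mem (𝒢.s p.1) (hG₀.mem_toFinset.2 (𝒢.obj_s p.1)), smashMul_sum_right,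
    Finset.sum_eq_single_of_mem p.2 ((Set.toFinite _).mem_toFinset.2 hp),
    smashMul_single_single, if_pos ⟨(𝒢.t_s p.1).symm, α.act_id _ (𝒢.obj_s p.1) _ hp⟩, 𝒢.mul_src]
  · intro x hx hne
    have hx : α.act (𝒢.s p.1) x = x :=
      α.act_id _ (𝒢.obj_s p.1) _ ((Set.toFinite _).mem_toFinset.1 hx)
    rw [smashMul_single_single, if_neg fun h => hne (hx.symm.trans h.2)]
  · intro e he hne
    rw [smashMul_sum_right]
    refine Finset.sum_eq_zero fun x _ => ?_
    rw [smashMul_single_single,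
      if_neg fun h => hne (h.1.trans (Gpd.t_eq_of_obj (hG₀.mem_toFinset.1 he))).symm]

theorem smashOne_smashMul (hG₀ : 𝒢.Objs.Finite) (hone : IsIdFamily 𝒜 one) {f : (G × X) →₀ A}
    (hf : f ∈ smashSet α 𝒜) : smashMul α (smashOne α one) f = f := by
  refine smashSet_induction (smashMul_zero_right _ _)
    (fun f g hf hg => by rw [smashMul_add_right, hf, hg]) (fun q b hb hq => ?_) hf
  rw [smashOne_smashMul_single hG₀ b hq, hone.one_t_mul hG₀ hb]

theorem smashMul_smashOne (hG₀ : 𝒢.Objs.Finite) (hone : IsIdFamily 𝒜 one) {f : (G × X) →₀ A}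
    (hf : f ∈ smashSet α 𝒜) : smashMul α f (smashOne α one) = f := by
  refine smashSet_induction (smashMul_zero_left _ _)
    (fun f g hf hg => by rw [smashMul_add_left, hf, hg]) (fun p a ha hp => ?_) hf
  rw [single_smashMul_smashOne hG₀ a hp, hone.mul_one_s hG₀ ha]

end Unit

section Idempotents

variable {G : Type u} {𝒢 : Gpd G} {X : Type v} {k : Type*} {A : Type w}
  [Field k] [Ring A] [Algebra k A] {α : GpdSetAction 𝒢 X} {𝒜 : GpdGrading 𝒢 k A}
  {one : G → A} {e e' : G} {x x' : X}

theorem smashMul_single_one_self (hone : IsIdFamily 𝒜 one) (he : 𝒢.obj e) (hx : x ∈ α.car e) :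
    smashMul α (single (e, x) (one e)) (single (e, x) (one e)) = single (e, x) (one e) := by
  rw [smashMul_single_single, if_pos ⟨he.trans (Gpd.t_eq_of_obj he).symm, α.act_id e he x hx⟩,
    Gpd.mul_self_of_obj he, ((hone.1 e he).2 _ (hone.1 e he).1).1]

theorem single_smashMul_single_eq_zero_of_ne (he : 𝒢.obj e) (he' : 𝒢.obj e')
    (hx' : x' ∈ α.car e') (a b : A) (hne : ((e, x) : G × X) ≠ (e', x')) :
    smashMul α (single (e, x) a) (single (e', x') b) = 0 := by
  rw [smashMul_single_single, if_neg]
  rintro ⟨hs, hact⟩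
  rw [he, Gpd.t_eq_of_obj he'] at hs
  rw [α.act_id e' he' x' hx'] at hact
  exact hne (by rw [hs, hact])

end Idempotents

theorem smash_product_is_unital_algebra_general
    {G : Type u} (𝒢 : Gpd G) {X : Type v} (k : Type*) (A : Type w)
    [Field k] [Ring A] [Algebra k A] [Finite X]
    (hG₀ : 𝒢.Objs.Finite)
    (𝒜 : GpdGrading 𝒢 k A) (α : GpdSetAction 𝒢 X)
    (one : G → A) (hone : IsIdFamily 𝒜 one) :
    -- the smash product is closed under its multiplication
    (∀ f₁ ∈ smashSet α 𝒜, ∀ f₂ ∈ smashSet α 𝒜, smashMul α f₁ f₂ ∈ smashSet α 𝒜) ∧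
    -- associativity
    (∀ f₁ ∈ smashSet α 𝒜, ∀ f₂ ∈ smashSet α 𝒜, ∀ f₃ ∈ smashSet α 𝒜,
      smashMul α (smashMul α f₁ f₂) f₃ = smashMul α f₁ (smashMul α f₂ f₃)) ∧
    -- the multiplication is k-bilinear
    (∀ f₁ ∈ smashSet α 𝒜, ∀ f₂ ∈ smashSet α 𝒜, ∀ f₃ ∈ smashSet α 𝒜,
      smashMul α (f₁ + f₂) f₃ = smashMul α f₁ f₃ + smashMul α f₂ f₃ ∧
      smashMul α f₃ (f₁ + f₂) = smashMul α f₃ f₁ + smashMul α f₃ f₂) ∧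
    (∀ (c : k), ∀ f₁ ∈ smashSet α 𝒜, ∀ f₂ ∈ smashSet α 𝒜,
      smashMul α (c • f₁) f₂ = c • smashMul α f₁ f₂ ∧
      smashMul α f₁ (c • f₂) = c • smashMul α f₁ f₂) ∧
    -- `Σ_{e ∈ 𝒢₀} Σ_{x ∈ X_e} 1_e δ_x` is the identity element
    (smashOne α one ∈ smashSet α 𝒜 ∧
      ∀ f ∈ smashSet α 𝒜, smashMul α (smashOne α one) f = f ∧
        smashMul α f (smashOne α one) = f) ∧
    -- the `1_e δ_x` are idempotents
    (∀ e x, 𝒢.obj e → x ∈ α.car e →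
      smashMul α (Finsupp.single ((e, x) : G × X) (one e))
        (Finsupp.single ((e, x) : G × X) (one e))
        = Finsupp.single ((e, x) : G × X) (one e)) ∧
    -- pairwise orthogonality
    (∀ e x e' x', 𝒢.obj e → x ∈ α.car e → 𝒢.obj e' → x' ∈ α.car e' →
      ((e, x) : G × X) ≠ (e', x') →
      smashMul α (Finsupp.single ((e, x) : G × X) (one e))
        (Finsupp.single ((e', x') : G × X) (one e')) = 0) :=
  ⟨fun _ hf₁ _ hf₂ => smashMul_mem hf₁ hf₂,
    fun f₁ _ f₂ _ _ hf₃ => smashMul_assoc f₁ f₂ hf₃,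
    fun f₁ _ f₂ _ f₃ _ => ⟨smashMul_add_left α f₁ f₂ f₃, smashMul_add_right α f₃ f₁ f₂⟩,
    fun c f₁ _ f₂ _ => ⟨smashMul_smul_left α c f₁ f₂, smashMul_smul_right α c f₁ f₂⟩,
    ⟨smashOne_mem hG₀ hone,
      fun _ hf => ⟨smashOne_smashMul hG₀ hone hf, smashMul_smashOne hG₀ hone hf⟩⟩,
    fun _ _ he hx => smashMul_single_one_self hone he hx,
    fun _ _ _ _ he _ he' hx' hne => single_smashMul_single_eq_zero_of_ne he he' hx' _ _ hne⟩

/-- The smash product `A #_α^𝒢 X` of a unital `𝒢`-graded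
algebra `A` with a finite split `𝒢`-set `X` (where `𝒢₀` is finite) is an
associative unital algebra with identity `Σ_{e ∈ 𝒢₀} Σ_{x ∈ X_e} 1_e δ_x`,
and the elements `1_e δ_x` (`e ∈ 𝒢₀`, `x ∈ X_e`) are pairwise orthogonal
idempotents. -/
theorem smash_product_is_unital_algebra
    {G : Type u} (𝒢 : Gpd G) {X : Type v} (k : Type*) (A : Type w)
    [Field k] [Ring A] [Algebra k A] [Finite X]
    (hG₀ : 𝒢.Objs.Finite)
    (𝒜 : GpdGrading 𝒢 k A) (α : GpdSetAction 𝒢 X) (hsplit : α.Split)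
    (one : G → A) (hone : IsIdFamily 𝒜 one) :
    -- the smash product is closed under its multiplication
    (∀ f₁ ∈ smashSet α 𝒜, ∀ f₂ ∈ smashSet α 𝒜, smashMul α f₁ f₂ ∈ smashSet α 𝒜) ∧
    -- associativity
    (∀ f₁ ∈ smashSet α 𝒜, ∀ f₂ ∈ smashSet α 𝒜, ∀ f₃ ∈ smashSet α 𝒜,
      smashMul α (smashMul α f₁ f₂) f₃ = smashMul α f₁ (smashMul α f₂ f₃)) ∧
    -- the multiplication is k-bilinear
    (∀ f₁ ∈ smashSet α 𝒜, ∀ f₂ ∈ smashSet α 𝒜, ∀ f₃ ∈ smashSet α 𝒜,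
      smashMul α (f₁ + f₂) f₃ = smashMul α f₁ f₃ + smashMul α f₂ f₃ ∧
      smashMul α f₃ (f₁ + f₂) = smashMul α f₃ f₁ + smashMul α f₃ f₂) ∧
    (∀ (c : k), ∀ f₁ ∈ smashSet α 𝒜, ∀ f₂ ∈ smashSet α 𝒜,
      smashMul α (c • f₁) f₂ = c • smashMul α f₁ f₂ ∧
      smashMul α f₁ (c • f₂) = c • smashMul α f₁ f₂) ∧
    -- `Σ_{e ∈ 𝒢₀} Σ_{x ∈ X_e} 1_e δ_x` is the identity element
    (smashOne α one ∈ smashSet α 𝒜 ∧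
      ∀ f ∈ smashSet α 𝒜, smashMul α (smashOne α one) f = f ∧
        smashMul α f (smashOne α one) = f) ∧
    -- the `1_e δ_x` are idempotents
    (∀ e x, 𝒢.obj e → x ∈ α.car e →
      smashMul α (Finsupp.single ((e, x) : G × X) (one e))
        (Finsupp.single ((e, x) : G × X) (one e))
        = Finsupp.single ((e, x) : G × X) (one e)) ∧
    -- pairwise orthogonality
    (∀ e x e' x', 𝒢.obj e → x ∈ α.car e → 𝒢.obj e' → x' ∈ α.car e' →
      ((e, x) : G × X) ≠ (e', x') →
      smashMul α (Finsupp.single ((e, x) : G × X) (one e))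
        (Finsupp.single ((e', x') : G × X) (one e')) = 0) :=
  smash_product_is_unital_algebra_general 𝒢 k A hG₀ 𝒜 α one hone

end
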